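/- Let Z_1, ..., Z_n be i.i.d. random variables taking values in a measurable space, let C_1, ..., C_K be a measurable partition with probabilities p_i = P(Z_1 ∈ C_i), and let N_i = #{j : Z_j ∈ C_i}. Then for every λ > 0, P( Σ_{i=1}^K |N_i/n - p_i| ≥ λ ) ≤ 2^K · exp(-n λ² / 2). -/

import Mathlib

/-!
The deviations `N_i / n - p_i` sum to zero, so with `A` the set of cells where the deviation is
nonnegative, `∑ i, |N_i / n - p_i| = 2 (N(A) / n - ν(A))`, where `N(A)` and `ν(A)` are the count
and the probability of the union of the cells in `A`. Hence the event forces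
`N(A) - n ν(A) ≥ n λ / 2` for one of the `2 ^ K` sets `A`, and Hoeffding's inequality for the
i.i.d. `[0, 1]`-valued indicators of that union bounds each of these events by `exp (-n λ² / 2)`.
-/

open MeasureTheory ProbabilityTheory Classical
open Finset

lemma measureReal_sum_indicator_sub_ge_le {α Ω : Type*} [MeasurableSpace α] [MeasurableSpace Ω]
    (ν : Measure α) (P : Measure Ω) [IsProbabilityMeasure P] (Z : ℕ → Ω → α)
    (hmeas : ∀ j, Measurable (Z j)) (hindep : iIndepFun Z P)
    (hlaw : ∀ j, Measure.map (Z j) P = ν) {U : Set α} (hU : MeasurableSet U) (n : ℕ) {t : ℝ}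
    (ht : 0 ≤ t) :
    P.real {ω | t ≤ ∑ j ∈ range n, (U.indicator 1 (Z j ω) - ν.real U)}
      ≤ Real.exp (-2 * t ^ 2 / n) := by
  have hf : Measurable (U.indicator (1 : α → ℝ)) := measurable_const.indicator hU
  have hmean : ∀ j, P[fun ω => U.indicator (1 : α → ℝ) (Z j ω)] = ν.real U := by
    intro j
    rw [← integral_indicator_one hU, ← hlaw j, integral_map (hmeas j).aemeasurable
      hf.aestronglyMeasurable]
  have hsubG : ∀ j < n, HasSubgaussianMGF (fun ω => U.indicator 1 (Z j ω) - ν.real U)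
      ((‖(1 : ℝ) - 0‖₊ / 2) ^ 2) P := by
    intro j _
    rw [← hmean j]
    refine hasSubgaussianMGF_of_mem_Icc (hf.comp (hmeas j)).aemeasurable (ae_of_all _ fun ω => ?_)
    by_cases h : Z j ω ∈ U <;> simp [h]
  have hindep' : iIndepFun (fun j ω => U.indicator 1 (Z j ω) - ν.real U) P :=
    hindep.comp (fun _ a => U.indicator 1 a - ν.real U) fun _ => hf.sub_const _
  refine (HasSubgaussianMGF.measure_sum_range_ge_le_of_iIndepFun hindep' hsubG ht).trans_eq ?_
  congr 1
  norm_num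
  ring

lemma sum_abs_eq_two_mul_sum_filter_nonneg {ι R : Type*} [CommRing R] [LinearOrder R]
    [IsOrderedRing R] (s : Finset ι) (x : ι → R) (hx : ∑ i ∈ s, x i = 0) :
    ∑ i ∈ s, |x i| = 2 * ∑ i ∈ s with 0 ≤ x i, x i := by
  have habs : ∀ i, |x i| = 2 * (if 0 ≤ x i then x i else 0) - x i := by
    intro i
    split_ifs with h
    · rw [abs_of_nonneg h]; ring
    · rw [abs_of_neg (not_le.1 h)]; ring
  simp only [habs, Finset.sum_sub_distrib, ← Finset.mul_sum, hx, Finset.sum_ite,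
    Finset.sum_const_zero]
  ring

section Partition

variable {α ι : Type*} [MeasurableSpace α] {C : ι → Set α}

lemma sum_indicator_biUnion_sub_measureReal (hC : ∀ i, MeasurableSet (C i))
    (hdisj : Pairwise fun i j => Disjoint (C i) (C j)) (ν : Measure α) [IsFiniteMeasure ν]
    (z : ℕ → α) (n : ℕ) (A : Finset ι) :
    ∑ j ∈ range n, ((⋃ i ∈ A, C i).indicator 1 (z j) - ν.real (⋃ i ∈ A, C i))
      = ∑ i ∈ A, ((#{j ∈ range n | z j ∈ C i} : ℝ) - n * ν.real (C i)) := by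
  rw [Finset.sum_sub_distrib, Finset.sum_sub_distrib,
    measureReal_biUnion_finset (fun i _ j _ hij => hdisj hij) (fun i _ => hC i)]
  simp only [Finset.indicator_biUnion_apply A C (fun i _ j _ hij => hdisj hij)]
  rw [Finset.sum_comm, Finset.sum_const, Finset.card_range, nsmul_eq_mul, Finset.mul_sum]
  simp [Set.indicator_apply, Finset.sum_boole]

lemma sum_card_filter_mem_sub_eq_zero [Fintype ι] (hC : ∀ i, MeasurableSet (C i))
    (hdisj : Pairwise fun i j => Disjoint (C i) (C j)) (hcover : (⋃ i, C i) = Set.univ)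
    (ν : Measure α) [IsProbabilityMeasure ν] (z : ℕ → α) (n : ℕ) :
    ∑ i, ((#{j ∈ range n | z j ∈ C i} : ℝ) - n * ν.real (C i)) = 0 := by
  rw [← sum_indicator_biUnion_sub_measureReal hC hdisj ν z n Finset.univ]
  simp [hcover]

lemma exists_le_sum_indicator_biUnion_sub [Fintype ι] (hC : ∀ i, MeasurableSet (C i))
    (hdisj : Pairwise fun i j => Disjoint (C i) (C j)) (hcover : (⋃ i, C i) = Set.univ)
    (ν : Measure α) [IsProbabilityMeasure ν] (z : ℕ → α) {n : ℕ} (hn : 0 < n) {lam : ℝ}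
    (h : lam ≤ ∑ i, |(#{j ∈ range n | z j ∈ C i} : ℝ) / n - ν.real (C i)|) :
    ∃ A : Finset ι, n * lam / 2 ≤
      ∑ j ∈ range n, ((⋃ i ∈ A, C i).indicator 1 (z j) - ν.real (⋃ i ∈ A, C i)) := by
  set y : ι → ℝ := fun i => #{j ∈ range n | z j ∈ C i} - n * ν.real (C i)
  have hn' : (0 : ℝ) < n := by exact_mod_cast hn
  refine ⟨({i | 0 ≤ y i} : Finset ι), ?_⟩
  rw [sum_indicator_biUnion_sub_measureReal hC hdisj ν z n]
  change _ ≤ ∑ i ∈ _, y i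
  have hy : ∑ i, |y i|
      = n * ∑ i, |(#{j ∈ range n | z j ∈ C i} : ℝ) / n - ν.real (C i)| := by
    rw [Finset.mul_sum]
    refine Finset.sum_congr rfl fun i _ => ?_
    rw [← abs_of_pos hn', ← abs_mul, abs_of_pos hn']
    simp only [y]
    field_simp
  have hsplit := sum_abs_eq_two_mul_sum_filter_nonneg Finset.univ y
    (sum_card_filter_mem_sub_eq_zero hC hdisj hcover ν z n)
  calc n * lam / 2
      ≤ n * (∑ i, |(#{j ∈ range n | z j ∈ C i} : ℝ) / n - ν.real (C i)|) / 2 := by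
        gcongr
    _ = ∑ i ∈ {i | 0 ≤ y i}, y i := by rw [← hy, hsplit]; ring

end Partition

theorem stmt7 {α : Type*} [MeasurableSpace α]
    (ν : Measure α) [IsProbabilityMeasure ν]
    {Ω : Type*} [MeasurableSpace Ω] (P : Measure Ω) [IsProbabilityMeasure P]
    (n K : ℕ) (Z : ℕ → Ω → α) (hmeas : ∀ j, Measurable (Z j))
    (hindep : iIndepFun Z P)
    (hlaw : ∀ j, Measure.map (Z j) P = ν)
    (C : Fin K → Set α) (hC : ∀ i, MeasurableSet (C i))
    (hdisj : Pairwise fun i j => Disjoint (C i) (C j))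
    (hcover : (⋃ i, C i) = Set.univ)
    (p : Fin K → ℝ) (hp : ∀ i, p i = (ν (C i)).toReal)
    (N : Fin K → Ω → ℕ)
    (hN : ∀ i ω, (N i ω : ℕ) = ((Finset.range n).filter fun j => decide (Z j ω ∈ C i) = true).card)
    (lam : ℝ) (hlam : 0 < lam) :
    P {ω | lam ≤ ∑ i : Fin K, |(N i ω : ℝ) / n - p i|}
      ≤ ENNReal.ofReal (2 ^ K * Real.exp (-(n : ℝ) * lam ^ 2 / 2)) := by
  rcases n.eq_zero_or_pos with rfl | hn
  · refine prob_le_one.trans ?_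
    simpa using one_le_pow₀ (M₀ := ENNReal) (n := K) one_le_two
  let E (A : Finset (Fin K)) := {ω | n * lam / 2 ≤
    ∑ j ∈ range n, ((⋃ i ∈ A, C i).indicator 1 (Z j ω) - ν.real (⋃ i ∈ A, C i))}
  have hcovered : {ω | lam ≤ ∑ i : Fin K, |(N i ω : ℝ) / n - p i|} ⊆ ⋃ A, E A := by
    intro ω hω
    simp only [Set.mem_ofPred_eq, hN, hp, decide_eq_true_eq] at hω
    exact Set.mem_iUnion.2
      (exists_le_sum_indicator_biUnion_sub hC hdisj hcover ν (Z · ω) hn hω)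
  rw [← ofReal_measureReal]
  gcongr
  calc P.real {ω | lam ≤ ∑ i : Fin K, |(N i ω : ℝ) / n - p i|}
      ≤ ∑ A, P.real (E A) :=
        (measureReal_mono hcovered).trans (measureReal_iUnion_fintype_le E)
    _ ≤ ∑ _A : Finset (Fin K), Real.exp (-(n : ℝ) * lam ^ 2 / 2) := by
      refine Finset.sum_le_sum fun A _ => ?_
      refine (measureReal_sum_indicator_sub_ge_le ν P Z hmeas hindep hlaw
        (A.measurableSet_biUnion fun i _ => hC i) n (by positivity)).trans_eq ?_
      congr 1
      field_simp
    _ = 2 ^ K * Real.exp (-(n : ℝ) * lam ^ 2 / 2) := by simp
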